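/- Let G be a d-regular graph on n vertices with μ = μ(G) the second-largest eigenvalue modulus of its adjacency matrix A. For every subset S of vertices with |S| = αn, ∑_{v ∈ V} |S ∩ N(v)|² ≤ [α(d² − μ²) + μ²]·|S|, where N(v) denotes the neighborhood of v. -/

import Mathlib

open Matrix Polynomial
open scoped Classical

lemma charpoly_conj_unitary {m : Type*} [Fintype m] [DecidableEq m]
    (U D : Matrix m m ℝ) (h1 : U * star U = 1) :
    (U * D * star U).charpoly = D.charpoly := by
  let φ : Matrix m m ℝ →+* Matrix m m ℝ[X] := (C : ℝ →+* ℝ[X]).mapMatrix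
  have hc : φ U * Matrix.scalar m (X : ℝ[X]) = Matrix.scalar m (X : ℝ[X]) * φ U :=
    (Matrix.scalar_commute (X : ℝ[X]) (Commute.all X) (φ U)).symm
  have hcm : charmatrix (U * D * star U) = φ U * charmatrix D * φ (star U) := by
    show Matrix.scalar m (X : ℝ[X]) - φ (U * D * star U)
        = φ U * (Matrix.scalar m (X : ℝ[X]) - φ D) * φ (star U)
    rw [mul_sub, sub_mul, hc, mul_assoc (Matrix.scalar m (X : ℝ[X])), ← map_mul φ, h1,
      _root_.map_one, mul_one, map_mul φ, map_mul φ]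
  rw [Matrix.charpoly, hcm, det_mul, det_mul, mul_right_comm, ← det_mul, ← map_mul φ, h1,
    _root_.map_one, det_one, one_mul, Matrix.charpoly]

lemma hermitian_charpoly {m : Type*} [Fintype m] [DecidableEq m]
    {A : Matrix m m ℝ} (hA : A.IsHermitian) :
    A.charpoly = ∏ i : m, (X - C (hA.eigenvalues i)) := by
  have hs := hA.spectral_theorem
  have hdiag : Matrix.diagonal (RCLike.ofReal ∘ hA.eigenvalues) = Matrix.diagonal hA.eigenvalues := by
    congr 1
  have hU1 : (hA.eigenvectorUnitary : Matrix m m ℝ) * star (hA.eigenvectorUnitary : Matrix m m ℝ) = 1 :=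
    Matrix.mem_unitaryGroup_iff.mp hA.eigenvectorUnitary.2
  conv_lhs => rw [hs, hdiag]
  rw [Unitary.conjStarAlgAut_apply, charpoly_conj_unitary _ _ hU1]
  rw [Matrix.charpoly]
  have : charmatrix (Matrix.diagonal hA.eigenvalues) =
      Matrix.diagonal (fun i => X - C (hA.eigenvalues i)) := by
    ext i j
    by_cases h : i = j
    · subst h; simp [charmatrix_apply_eq]
    · simp [charmatrix_apply_ne _ _ _ h, Matrix.diagonal_apply_ne _ h]
  rw [this, det_diagonal]

set_option maxHeartbeats 1000000 in
/-- Let `G` be `d`-regular on `n` vertices with eigenvalue modulus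
`μ = max (lam 1) |lam (n-1)|`.  For every `S` with `|S| = α n`,
`∑_{v} |S ∩ N(v)|² ≤ (α (d² - μ²) + μ²) |S|`. -/
theorem sum_sq_neighbors_le
    (n d : ℕ) (hn : 2 ≤ n) (G : SimpleGraph (Fin n))
    (hreg : G.IsRegularOfDegree d)
    (lam : Fin n → ℝ) (hanti : Antitone lam)
    (hchar : (G.adjMatrix ℝ).charpoly = ∏ i : Fin n, (X - C (lam i)))
    (μ : ℝ) (hμ : μ = max (lam ⟨1, by omega⟩) |lam ⟨n - 1, by omega⟩|)
    (α : ℝ) (S : Finset (Fin n)) (hS : (S.card : ℝ) = α * n) :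
    ∑ v : Fin n, ((S ∩ G.neighborFinset v).card : ℝ) ^ 2
      ≤ (α * ((d : ℝ) ^ 2 - μ ^ 2) + μ ^ 2) * S.card := by
  have hn0 : (0:ℝ) < n := by positivity
  have hα1 : α ≤ 1 := by
    have h1 := S.card_le_univ
    have h2 : (S.card : ℝ) ≤ n := by simpa using (Nat.cast_le (α := ℝ)).mpr h1
    rw [hS] at h2; nlinarith
  have hα0 : 0 ≤ α := by
    have : (0:ℝ) ≤ S.card := by positivity
    rw [hS] at this; nlinarith
  have hS0 : (0:ℝ) ≤ S.card := by positivity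
  rcases le_or_gt (d : ℝ) μ with hd | hdμ
  -- Trivial case: μ ≥ d.
  · have hcard : ∀ v : Fin n, (S ∩ G.neighborFinset v).card
        = ∑ u ∈ S, if G.Adj v u then 1 else 0 := by
      intro v
      rw [Finset.sum_ite, Finset.sum_const, Finset.sum_const]
      simp only [smul_eq_mul, mul_one, mul_zero, add_zero]
      congr 1
      ext u
      simp [SimpleGraph.mem_neighborFinset, SimpleGraph.adj_comm]
    have hsumN : ∑ v : Fin n, (S ∩ G.neighborFinset v).card = d * S.card := by
      simp_rw [hcard]
      rw [Finset.sum_comm]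
      have : ∀ u : Fin n, ∑ v : Fin n, (if G.Adj v u then 1 else 0) = d := by
        intro u
        rw [Finset.sum_ite, Finset.sum_const, Finset.sum_const]
        simp only [smul_eq_mul, mul_one, mul_zero, add_zero]
        have : Finset.filter (fun v => G.Adj v u) Finset.univ = G.neighborFinset u := by
          ext v; simp [SimpleGraph.mem_neighborFinset, SimpleGraph.adj_comm]
        rw [this]
        exact hreg u
      simp [this, mul_comm]
    have hle : ∀ v : Fin n, ((S ∩ G.neighborFinset v).card : ℝ) ≤ d := by
      intro v
      have h1 := Finset.card_le_card (Finset.inter_subset_right (s₁ := S) (s₂ := G.neighborFinset v))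
      have h2 : (G.neighborFinset v).card = d := hreg v
      exact_mod_cast h2 ▸ h1
    have htriv : ∑ v : Fin n, ((S ∩ G.neighborFinset v).card : ℝ) ^ 2 ≤ d^2 * S.card := by
      calc ∑ v : Fin n, ((S ∩ G.neighborFinset v).card : ℝ) ^ 2
          ≤ ∑ v : Fin n, (d:ℝ) * (S ∩ G.neighborFinset v).card := by
            apply Finset.sum_le_sum
            intro v _
            have h0 : (0:ℝ) ≤ ((S ∩ G.neighborFinset v).card : ℝ) := by positivity
            nlinarith [hle v]
        _ = d^2 * S.card := by
            rw [← Finset.mul_sum]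
            have : ∑ v : Fin n, ((S ∩ G.neighborFinset v).card : ℝ) = (d : ℝ) * S.card := by
              exact_mod_cast congrArg (Nat.cast : ℕ → ℝ) hsumN
            rw [this]; ring
    have hμd : (d:ℝ)^2 ≤ μ^2 := by nlinarith [Nat.cast_nonneg (α := ℝ) d]
    have key : (0:ℝ) ≤ (1-α)*(μ^2-(d:ℝ)^2)*S.card := by
      apply mul_nonneg (mul_nonneg (by linarith) (by linarith)) hS0
    nlinarith [htriv, key]
  -- Main case: μ < d.
  · have hA : (G.adjMatrix ℝ).IsHermitian := by
      ext i j
      simp only [Matrix.conjTranspose_apply, SimpleGraph.adjMatrix_apply]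
      rw [SimpleGraph.adj_comm]
      split <;> simp
    set A := G.adjMatrix ℝ with hAdef
    set E := hA.eigenvalues with hE
    set B := hA.eigenvectorBasis with hB
    have hsym : (Matrix.toEuclideanLin A).IsSymmetric := Matrix.isHermitian_iff_isSymmetric.mp hA
    have hLB : ∀ i : Fin n, Matrix.toEuclideanLin A (B i) = E i • B i := by
      intro i
      apply (WithLp.equiv 2 (Fin n → ℝ)).injective
      simpa using hA.mulVec_eigenvectorBasis i
    have hrepr : ∀ (x : EuclideanSpace ℝ (Fin n)) (i : Fin n),
        B.repr (Matrix.toEuclideanLin A x) i = E i * B.repr x i := by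
      intro x i
      rw [B.repr_apply_apply, B.repr_apply_apply, ← hsym, hLB, inner_smul_left]
      simp
    -- multiset of lam equals multiset of eigenvalues
    have hmult : Finset.univ.val.map lam = Finset.univ.val.map E := by
      have h2 : ((Finset.univ.val.map lam).map (fun a : ℝ => X - C a)).prod
          = ((Finset.univ.val.map E).map (fun a : ℝ => X - C a)).prod := by
        rw [Multiset.map_map, Multiset.map_map]
        calc (Finset.univ.val.map fun i => X - C (lam i)).prod
            = ∏ i : Fin n, (X - C (lam i)) := rfl
          _ = ∏ i : Fin n, (X - C (E i)) := by rw [← hchar, hermitian_charpoly hA]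
          _ = (Finset.univ.val.map fun i => X - C (E i)).prod := rfl
      calc Finset.univ.val.map lam
          = ((Finset.univ.val.map lam).map (fun a : ℝ => X - C a)).prod.roots :=
            (roots_multiset_prod_X_sub_C _).symm
        _ = ((Finset.univ.val.map E).map (fun a : ℝ => X - C a)).prod.roots := by rw [h2]
        _ = Finset.univ.val.map E := roots_multiset_prod_X_sub_C _
    -- bounds on lam for indices ≥ 1
    have hμ0 : 0 ≤ μ := le_trans (abs_nonneg _) (hμ ▸ le_max_right _ _)
    have hlam_abs : ∀ j : Fin n, (j : ℕ) ≠ 0 → |lam j| ≤ μ := by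
      intro j hj
      have h1 : lam j ≤ lam ⟨1, by omega⟩ := hanti (by
        simp only [Fin.le_def]; omega)
      have h2 : lam ⟨n-1, by omega⟩ ≤ lam j := hanti (by
        simp only [Fin.le_def]; omega)
      rw [abs_le]
      constructor
      · have := hμ ▸ le_max_right (lam ⟨1, by omega⟩) |lam ⟨n - 1, by omega⟩|
        have h3 : -μ ≤ lam ⟨n-1, by omega⟩ := by
          rw [hμ]
          have := neg_abs_le (lam (⟨n-1, by omega⟩ : Fin n))
          have := le_max_right (lam (⟨1, by omega⟩ : Fin n)) |lam (⟨n - 1, by omega⟩ : Fin n)|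
          linarith
        linarith
      · have h4 : lam ⟨1, by omega⟩ ≤ μ := hμ ▸ le_max_left _ _
        linarith
    -- constant vector
    set u : EuclideanSpace ℝ (Fin n) := (WithLp.equiv 2 (Fin n → ℝ)).symm (fun _ => 1) with hu
    have hAu : Matrix.toEuclideanLin A u = (d:ℝ) • u := by
      apply (WithLp.equiv 2 (Fin n → ℝ)).injective
      funext v
      show (A *ᵥ (fun _ => (1:ℝ))) v = _
      rw [hAdef, SimpleGraph.adjMatrix_mulVec_apply]
      simp [hreg v]
      norm_num [show u v = 1 from rfl]
    have hEd : ∀ i : Fin n, E i ≠ (d:ℝ) → B.repr u i = 0 := by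
      intro i hi
      have h1 := hrepr u i
      rw [hAu, _root_.map_smul] at h1
      have h2 : (d:ℝ) * B.repr u i = E i * B.repr u i := by simpa using h1
      by_contra h3
      exact hi (mul_right_cancel₀ h3 h2).symm
    have hu0 : u ≠ 0 := by
      intro h
      have h1 := congrFun (congrArg (WithLp.equiv 2 (Fin n → ℝ)) h) ⟨0, by omega⟩
      simp at h1
      exact one_ne_zero (show (1:ℝ) = 0 from h1)
    have hex : ∃ i, E i = (d:ℝ) := by
      by_contra hcon
      push_neg at hcon
      apply hu0
      have h1 : B.repr u = 0 := by
        ext i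
        simpa using hEd i (hcon i)
      have := congrArg B.repr.symm h1
      simpa using this
    obtain ⟨i₀, hi₀⟩ := hex
    have hdmem : (d:ℝ) ∈ Finset.univ.val.map lam := by
      rw [hmult]
      exact Multiset.mem_map.mpr ⟨i₀, by simp, hi₀⟩
    have hlam0 : lam ⟨0, by omega⟩ = d := by
      obtain ⟨j, _, hj⟩ := Multiset.mem_map.mp hdmem
      have hj0 : (j : ℕ) = 0 := by
        by_contra h
        have h1 := hlam_abs j h
        rw [hj] at h1
        have := le_abs_self (d:ℝ)
        linarith
      have : j = ⟨0, by omega⟩ := Fin.ext hj0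
      rwa [this] at hj
    -- uniqueness of the eigenvalue d
    have huniq : ∀ i : Fin n, E i = (d:ℝ) → i = i₀ := by
      intro i hi
      by_contra hne
      have hle1 : Multiset.count (d:ℝ) (Finset.univ.val.map lam) ≤ 1 := by
        rw [Multiset.count_map, ← Finset.filter_val, ← Finset.card_def]
        apply Finset.card_le_one.mpr
        intro a ha b hb
        simp only [Finset.mem_filter] at ha hb
        have ha0 : (a : ℕ) = 0 := by
          by_contra h
          have := hlam_abs a h
          rw [← ha.2] at this
          have := le_abs_self (d:ℝ)
          linarith
        have hb0 : (b : ℕ) = 0 := by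
          by_contra h
          have := hlam_abs b h
          rw [← hb.2] at this
          have := le_abs_self (d:ℝ)
          linarith
        exact Fin.ext (ha0.trans hb0.symm)
      have h2le : 2 ≤ Multiset.count (d:ℝ) (Finset.univ.val.map E) := by
        rw [Multiset.count_map, ← Finset.filter_val, ← Finset.card_def]
        apply Finset.one_lt_card.mpr
        exact ⟨i, by simp [hi], i₀, by simp [hi₀], hne⟩
      rw [hmult] at hle1
      omega
    have hEbound : ∀ i : Fin n, i ≠ i₀ → |E i| ≤ μ := by
      intro i hne
      have hmem : E i ∈ Finset.univ.val.map E := Multiset.mem_map.mpr ⟨i, by simp, rfl⟩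
      rw [← hmult] at hmem
      obtain ⟨j, _, hj⟩ := Multiset.mem_map.mp hmem
      by_cases hj0 : (j : ℕ) = 0
      · exfalso
        have hje : j = ⟨0, by omega⟩ := Fin.ext hj0
        rw [hje, hlam0] at hj
        exact hne (huniq i hj.symm)
      · rw [← hj]
        exact hlam_abs j hj0
    -- the indicator vector of S
    set f : EuclideanSpace ℝ (Fin n) :=
      (WithLp.equiv 2 (Fin n → ℝ)).symm (fun v => if v ∈ S then 1 else 0) with hf
    set c : Fin n → ℝ := fun i => B.repr f i with hc
    -- Parseval-type identities
    have hnormsq : ∀ y : EuclideanSpace ℝ (Fin n), ∑ i, (y i)^2 = ‖y‖^2 := by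
      intro y
      rw [EuclideanSpace.norm_eq, Real.sq_sqrt (by positivity)]
      simp [sq_abs]
    have hParse : ∀ y : EuclideanSpace ℝ (Fin n), ∑ i, (B.repr y i)^2 = ∑ v, (y v)^2 := by
      intro y
      rw [hnormsq, hnormsq, LinearIsometryEquiv.norm_map]
    -- value of A *ᵥ f
    have hAf : ∀ v : Fin n, (Matrix.toEuclideanLin A f) v = ((S ∩ G.neighborFinset v).card : ℝ) := by
      intro v
      show (A *ᵥ (fun w => if w ∈ S then (1:ℝ) else 0)) v = _
      rw [hAdef, SimpleGraph.adjMatrix_mulVec_apply]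
      rw [Finset.sum_ite, Finset.sum_const, Finset.sum_const]
      simp [Finset.filter_mem_eq_inter, Finset.inter_comm]
    have hLHS : ∑ v : Fin n, ((S ∩ G.neighborFinset v).card : ℝ) ^ 2
        = ∑ i, (E i * c i)^2 := by
      calc ∑ v : Fin n, ((S ∩ G.neighborFinset v).card : ℝ) ^ 2
          = ∑ v, ((Matrix.toEuclideanLin A f) v)^2 := by
            apply Finset.sum_congr rfl
            intro v _
            rw [hAf v]
        _ = ∑ i, (B.repr (Matrix.toEuclideanLin A f) i)^2 := (hParse _).symm
        _ = ∑ i, (E i * c i)^2 := by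
            apply Finset.sum_congr rfl
            intro i _
            rw [hrepr f i]
    have hsumc : ∑ i, (c i)^2 = (S.card : ℝ) := by
      rw [show ∑ i, (c i)^2 = ∑ i, (B.repr f i)^2 from rfl, hParse f]
      have : ∀ v : Fin n, ((f v)^2 : ℝ) = if v ∈ S then 1 else 0 := by
        intro v
        show ((if v ∈ S then (1:ℝ) else 0))^2 = _
        split <;> norm_num
      rw [Finset.sum_congr rfl fun v _ => this v]
      simp
    -- coordinates of u
    have hui : ∀ i : Fin n, i ≠ i₀ → B.repr u i = 0 := by
      intro i hne
      apply hEd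
      intro h
      have h1 := hEbound i hne
      rw [h] at h1
      have := le_abs_self (d:ℝ)
      linarith
    have hun : (B.repr u i₀)^2 = n := by
      have h1 : ∑ i, (B.repr u i)^2 = (n : ℝ) := by
        rw [hParse u]
        have : ∀ v : Fin n, ((u v)^2 : ℝ) = 1 := by intro v; show ((1:ℝ))^2 = 1; norm_num
        rw [Finset.sum_congr rfl fun v _ => this v]
        simp
      rw [← h1]
      rw [Finset.sum_eq_single i₀]
      · intro b _ hb
        rw [hui b hb]
        ring
      · intro h; exact absurd (Finset.mem_univ i₀) h
    have huf : B.repr u i₀ * c i₀ = (S.card : ℝ) := by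
      have h1 : (inner ℝ u f : ℝ) = (S.card : ℝ) := by
        rw [PiLp.inner_apply]
        simp only [RCLike.inner_apply, conj_trivial]
        rw [Finset.sum_congr rfl fun v _ => mul_comm (f v) (u v)]
        have : ∀ v : Fin n, u v * f v = if v ∈ S then (1:ℝ) else 0 := by
          intro v
          show (1:ℝ) * (if v ∈ S then (1:ℝ) else 0) = _
          rw [one_mul]
        rw [Finset.sum_congr rfl fun v _ => this v]
        simp
      have h2 : (inner ℝ u f : ℝ) = ∑ i, B.repr u i * c i := by
        rw [← B.repr.inner_map_map u f, PiLp.inner_apply]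
        simp only [RCLike.inner_apply, conj_trivial]
        exact Finset.sum_congr rfl fun i _ => mul_comm _ _
      rw [h2] at h1
      rw [← h1]
      rw [Finset.sum_eq_single i₀]
      · intro b _ hb
        rw [hui b hb]
        ring
      · intro h; exact absurd (Finset.mem_univ i₀) h
    have hci₀ : (c i₀)^2 * n = (S.card : ℝ)^2 := by
      have := congrArg (fun x => x^2) huf
      simp only [mul_pow] at this
      rw [← this, hun]
      ring
    have hcα : (c i₀)^2 = α * S.card := by
      have h1 : (c i₀)^2 * n = (α * S.card) * n := by
        rw [hci₀, hS]; ring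
      exact mul_right_cancel₀ (ne_of_gt hn0) h1
    -- final estimate
    have herase : ∑ i ∈ Finset.univ.erase i₀, (c i)^2 = (S.card : ℝ) - (c i₀)^2 := by
      have h := Finset.add_sum_erase Finset.univ (fun i => (c i)^2) (Finset.mem_univ i₀)
      linarith [hsumc, h]
    rw [hLHS]
    have hsplit : ∑ i, (E i * c i)^2
        = (E i₀ * c i₀)^2 + ∑ i ∈ Finset.univ.erase i₀, (E i * c i)^2 :=
      (Finset.add_sum_erase Finset.univ (fun i => (E i * c i)^2) (Finset.mem_univ i₀)).symm
    rw [hsplit]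
    have hbound : ∑ i ∈ Finset.univ.erase i₀, (E i * c i)^2
        ≤ μ^2 * ((S.card : ℝ) - (c i₀)^2) := by
      rw [← herase, Finset.mul_sum]
      apply Finset.sum_le_sum
      intro i hi
      have hne : i ≠ i₀ := Finset.ne_of_mem_erase hi
      have h1 : (E i)^2 ≤ μ^2 := by
        rw [← sq_abs]
        exact pow_le_pow_left₀ (abs_nonneg _) (hEbound i hne) 2
      calc (E i * c i)^2 = (E i)^2 * (c i)^2 := mul_pow _ _ 2
        _ ≤ μ^2 * (c i)^2 := mul_le_mul_of_nonneg_right h1 (sq_nonneg _)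
    have hfirst : (E i₀ * c i₀)^2 = (d:ℝ)^2 * (α * S.card) := by
      rw [hi₀, mul_pow, hcα]
    rw [hfirst]
    have hexp : (α * ((d : ℝ) ^ 2 - μ ^ 2) + μ ^ 2) * S.card
        = (d:ℝ)^2 * (α * S.card) + μ^2 * ((S.card : ℝ) - α * S.card) := by ring
    rw [hexp]
    have hb2 := hbound
    rw [hcα] at hb2
    linarith
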